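/- Let n ≥ 1, let A : ℝ^n → Sym_n(ℝ) with A(y) positive semidefinite for every y, and let B : ℝ^n → ℝ^n be a bounded function with ‖B(y)‖ ≤ b for all y. Fix p ∈ ℝ^n and γ ∈ ℝ. If v : ℝ^n → ℝ is a C², ℤ^n-periodic function satisfying −tr(A(y) D²v(y)) + B(y) · (∇v(y) + p) = γ for all y ∈ ℝ^n, then |γ| ≤ |p| · b. -/

import Mathlib

/-!
Maximum principle. A continuous `ℤⁿ`-periodic function attains its extrema, since its range is
the image of the compact unit cube. At a maximum `y₀` of `v` the gradient vanishes and the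
Hessian is negative semidefinite, so `tr(A D²v) ≤ 0` for positive semidefinite `A`
(write `A = Cᵀ C`); the cell equation then gives `γ ≥ B(y₀) · p ≥ -|p| b`. Symmetrically,
a minimum gives `γ ≤ |p| b`.
-/

open scoped InnerProductSpace

/-- The Hessian matrix of `w : ℝⁿ → ℝ` at `y`, with entries the iterated directional
derivatives along the standard basis vectors. -/
noncomputable def hessM {n : ℕ} (w : EuclideanSpace ℝ (Fin n) → ℝ)
    (y : EuclideanSpace ℝ (Fin n)) : Matrix (Fin n) (Fin n) ℝ :=
  fun i j =>
    fderiv ℝ (fun z => fderiv ℝ w z (EuclideanSpace.single j 1)) y (EuclideanSpace.single i 1)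

/-- An integer vector `k ∈ ℤⁿ` viewed as an element of `ℝⁿ`. -/
noncomputable def intVec {n : ℕ} (k : Fin n → ℤ) : EuclideanSpace ℝ (Fin n) :=
  (WithLp.equiv 2 (Fin n → ℝ)).symm (fun i => (k i : ℝ))

/-- A function on `ℝⁿ` is `ℤⁿ`-periodic. -/
def ZPeriodic {n : ℕ} (f : EuclideanSpace ℝ (Fin n) → ℝ) : Prop :=
  ∀ (y : EuclideanSpace ℝ (Fin n)) (k : Fin n → ℤ), f (y + intVec k) = f y

open Filter Topology Set Matrix

theorem ContDiffAt.differentiableAt_fderiv {𝕜 E F : Type*} [NontriviallyNormedField 𝕜]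
    [NormedAddCommGroup E] [NormedSpace 𝕜 E] [NormedAddCommGroup F] [NormedSpace 𝕜 F]
    {f : E → F} {a : E} (hf : ContDiffAt 𝕜 2 f a) : DifferentiableAt 𝕜 (fderiv 𝕜 f) a :=
  (hf.fderiv_right (m := 1) (by norm_num)).differentiableAt one_ne_zero

theorem IsLocalMin.deriv_deriv_nonneg {f : ℝ → ℝ} {x₀ : ℝ} (h : IsLocalMin f x₀)
    (hc : ContinuousAt f x₀) : 0 ≤ deriv (deriv f) x₀ := by
  by_contra! hneg
  -- the second-derivative test would make `x₀` a local maximum as well, so `f` is locally constant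
  have hconst : f =ᶠ[𝓝 x₀] fun _ => f x₀ := by
    filter_upwards [h, isLocalMax_of_deriv_deriv_neg hneg h.deriv_eq_zero hc] with x hmin hmax
    exact le_antisymm hmax hmin
  have hzero : deriv (deriv f) x₀ = 0 := by
    rw [hconst.deriv.deriv_eq]
    simp
  exact hneg.ne hzero

section SecondOrder

variable {E : Type*} [NormedAddCommGroup E] [NormedSpace ℝ E] {f : E → ℝ} {a : E}

theorem IsLocalMin.fderiv_fderiv_apply_self_nonneg (h : IsLocalMin f a)
    (hf : ContDiffAt ℝ 2 f a) (u : E) : 0 ≤ fderiv ℝ (fderiv ℝ f) a u u := by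
  have hline : Continuous fun t : ℝ => a + t • u := by fun_prop
  have hline_deriv : ∀ t : ℝ, HasDerivAt (fun s : ℝ => a + s • u) u t := fun t => by
    simpa using ((hasDerivAt_id t).smul_const u).const_add a
  have hfirst : deriv (fun t : ℝ => f (a + t • u)) =ᶠ[𝓝 0]
      fun t => fderiv ℝ f (a + t • u) u := by
    have hdiff : ∀ᶠ t in 𝓝 (0 : ℝ), DifferentiableAt ℝ f (a + t • u) := by
      refine (hline.tendsto' 0 a (by simp)).eventually ?_
      exact (hf.eventually (by simp)).mono fun y hy => hy.differentiableAt (by simp)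
    filter_upwards [hdiff] with t ht
    exact (ht.hasFDerivAt.comp_hasDerivAt t (hline_deriv t)).deriv
  have hsecond : HasDerivAt (fun t : ℝ => fderiv ℝ f (a + t • u) u)
      (fderiv ℝ (fderiv ℝ f) a u u) 0 := by
    have hf' : DifferentiableAt ℝ (fderiv ℝ f) (a + (0 : ℝ) • u) := by
      simpa using hf.differentiableAt_fderiv
    have := (ContinuousLinearMap.apply ℝ ℝ u).hasFDerivAt.comp_hasDerivAt 0
      (hf'.hasFDerivAt.comp_hasDerivAt 0 (hline_deriv 0))
    simp only [zero_smul, add_zero] at this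
    exact this
  have hmin : IsLocalMin (fun t : ℝ => f (a + t • u)) 0 :=
    IsLocalMin.comp_continuous (g := fun t : ℝ => a + t • u) (by simpa using h) hline.continuousAt
  have := hmin.deriv_deriv_nonneg (hf.continuousAt.comp_of_eq hline.continuousAt (by simp))
  rwa [hfirst.deriv_eq, hsecond.deriv] at this

theorem IsLocalMax.fderiv_fderiv_apply_self_nonpos (h : IsLocalMax f a)
    (hf : ContDiffAt ℝ 2 f a) (u : E) : fderiv ℝ (fderiv ℝ f) a u u ≤ 0 := by
  have := h.neg.fderiv_fderiv_apply_self_nonneg hf.neg u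
  rw [show fderiv ℝ (fun x => -f x) = -fderiv ℝ f from funext fun _ => fderiv_fun_neg,
    fderiv_neg] at this
  simpa using this

end SecondOrder

theorem Matrix.PosSemidef.trace_mul_nonneg {m : Type*} [Fintype m]
    {A H : Matrix m m ℝ} (hA : A.PosSemidef) (hH : ∀ x, 0 ≤ x ⬝ᵥ H *ᵥ x) :
    0 ≤ (A * H).trace := by
  classical
  open scoped MatrixOrder in
  obtain ⟨C, rfl⟩ := CStarAlgebra.nonneg_iff_eq_star_mul_self.mp hA.nonneg
  rw [Matrix.mul_assoc, trace_mul_comm, trace]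
  refine Finset.sum_nonneg fun k _ => ?_
  simpa [mul_mul_apply, star_eq_conjTranspose] using hH (C k)

section Hessian

variable {n : ℕ} {w : EuclideanSpace ℝ (Fin n) → ℝ} {y : EuclideanSpace ℝ (Fin n)}

theorem hessM_apply (hw : DifferentiableAt ℝ (fderiv ℝ w) y) (i j : Fin n) :
    hessM w y i j =
      fderiv ℝ (fderiv ℝ w) y (EuclideanSpace.single i 1) (EuclideanSpace.single j 1) := by
  simp [hessM, fderiv_clm_apply hw (differentiableAt_const _)]

theorem dotProduct_hessM_mulVec (hw : DifferentiableAt ℝ (fderiv ℝ w) y) (x : Fin n → ℝ) :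
    x ⬝ᵥ hessM w y *ᵥ x = fderiv ℝ (fderiv ℝ w) y (WithLp.toLp 2 x) (WithLp.toLp 2 x) := by
  set b := (EuclideanSpace.basisFun (Fin n) ℝ).toBasis
  set D := (ContinuousLinearMap.coeLM ℝ).comp (fderiv ℝ (fderiv ℝ w) y).toLinearMap
  have hmat : hessM w y = LinearMap.toMatrix₂ b b D := by
    ext i j
    simp [hessM_apply hw, b, D]
  have := dotProduct_toMatrix₂_mulVec b b D x x
  simp only [RingHom.coe_id, Function.id_comp] at this
  rw [hmat, this]
  rfl

theorem IsLocalMin.trace_mul_hessM_nonneg (h : IsLocalMin w y) (hw : ContDiffAt ℝ 2 w y)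
    {A : Matrix (Fin n) (Fin n) ℝ} (hA : A.PosSemidef) : 0 ≤ (A * hessM w y).trace :=
  hA.trace_mul_nonneg fun x => by
    rw [dotProduct_hessM_mulVec hw.differentiableAt_fderiv]
    exact h.fderiv_fderiv_apply_self_nonneg hw _

theorem IsLocalMax.trace_mul_hessM_nonpos (h : IsLocalMax w y) (hw : ContDiffAt ℝ 2 w y)
    {A : Matrix (Fin n) (Fin n) ℝ} (hA : A.PosSemidef) : (A * hessM w y).trace ≤ 0 := by
  have := hA.trace_mul_nonneg (H := -hessM w y) fun x => by
    rw [neg_mulVec, dotProduct_neg, dotProduct_hessM_mulVec hw.differentiableAt_fderiv,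
      neg_nonneg]
    exact h.fderiv_fderiv_apply_self_nonpos hw _
  rwa [Matrix.mul_neg, trace_neg, neg_nonneg] at this

end Hessian

section Periodic

variable {n : ℕ} {f : EuclideanSpace ℝ (Fin n) → ℝ}

theorem ZPeriodic.image_unitCube (hf : ZPeriodic f) :
    f '' (WithLp.toLp 2 '' univ.pi fun _ => Icc 0 1) = range f := by
  refine (image_subset_range _ _).antisymm ?_
  rintro _ ⟨y, rfl⟩
  refine ⟨y - intVec fun i => ⌊y i⌋, ⟨fun i => Int.fract (y i), ?_, ?_⟩, ?_⟩
  · exact fun i _ => ⟨Int.fract_nonneg _, (Int.fract_lt_one _).le⟩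
  · ext i
    simp [intVec, Int.self_sub_floor]
  · simpa using (hf (y - intVec fun i => ⌊y i⌋) fun i => ⌊y i⌋).symm

theorem ZPeriodic.isCompact_range (hf : ZPeriodic f) (hc : Continuous f) :
    IsCompact (range f) := by
  rw [← hf.image_unitCube]
  exact ((isCompact_univ_pi fun _ => isCompact_Icc).image (PiLp.continuous_toLp 2 _)).image hc

theorem ZPeriodic.exists_forall_le (hf : ZPeriodic f) (hc : Continuous f) :
    ∃ x, ∀ y, f x ≤ f y := by
  obtain ⟨_, ⟨x, rfl⟩, hx⟩ := (hf.isCompact_range hc).exists_isLeast (range_nonempty f)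
  exact ⟨x, fun y => hx ⟨y, rfl⟩⟩

theorem ZPeriodic.exists_forall_ge (hf : ZPeriodic f) (hc : Continuous f) :
    ∃ x, ∀ y, f y ≤ f x := by
  obtain ⟨_, ⟨x, rfl⟩, hx⟩ := (hf.isCompact_range hc).exists_isGreatest (range_nonempty f)
  exact ⟨x, fun y => hx ⟨y, rfl⟩⟩

end Periodic

theorem linear_cell_value_bound_general
    (n : ℕ)
    (A : EuclideanSpace ℝ (Fin n) → Matrix (Fin n) (Fin n) ℝ)
    (hApsd : ∀ y, (A y).PosSemidef)
    (B : EuclideanSpace ℝ (Fin n) → EuclideanSpace ℝ (Fin n))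
    (b : ℝ) (hB : ∀ y, ‖B y‖ ≤ b)
    (p : EuclideanSpace ℝ (Fin n)) (γ : ℝ)
    (v : EuclideanSpace ℝ (Fin n) → ℝ)
    (hv : ContDiff ℝ 2 v) (hvper : ZPeriodic v)
    (heq : ∀ y, -((A y) * hessM v y).trace + ⟪B y, gradient v y + p⟫_ℝ = γ) :
    |γ| ≤ ‖p‖ * b := by
  have hdrift : ∀ y, |⟪B y, p⟫_ℝ| ≤ ‖p‖ * b := fun y =>
    (abs_real_inner_le_norm _ _).trans (by rw [mul_comm]; gcongr; exact hB y)
  obtain ⟨ymax, hmax⟩ := hvper.exists_forall_ge hv.continuous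
  obtain ⟨ymin, hmin⟩ := hvper.exists_forall_le hv.continuous
  have hmax' : IsLocalMax v ymax := .of_forall hmax
  have hmin' : IsLocalMin v ymin := .of_forall hmin
  have heq_max := heq ymax
  have heq_min := heq ymin
  rw [show gradient v ymax = 0 by simp [gradient, hmax'.fderiv_eq_zero], zero_add] at heq_max
  rw [show gradient v ymin = 0 by simp [gradient, hmin'.fderiv_eq_zero], zero_add] at heq_min
  have htr_max := hmax'.trace_mul_hessM_nonpos hv.contDiffAt (hApsd ymax)
  have htr_min := hmin'.trace_mul_hessM_nonneg hv.contDiffAt (hApsd ymin)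
  rw [abs_le]
  constructor <;> linarith [(abs_le.mp (hdrift ymax)).1, (abs_le.mp (hdrift ymin)).2]

/-- Bound on the effective value of the linear cell problem with bounded drift. -/
theorem linear_cell_value_bound
    (n : ℕ) (hn : 1 ≤ n)
    (A : EuclideanSpace ℝ (Fin n) → Matrix (Fin n) (Fin n) ℝ)
    (hAsymm : ∀ y, (A y).IsSymm) (hApsd : ∀ y, (A y).PosSemidef)
    (B : EuclideanSpace ℝ (Fin n) → EuclideanSpace ℝ (Fin n))
    (b : ℝ) (hB : ∀ y, ‖B y‖ ≤ b)
    (p : EuclideanSpace ℝ (Fin n)) (γ : ℝ)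
    (v : EuclideanSpace ℝ (Fin n) → ℝ)
    (hv : ContDiff ℝ 2 v) (hvper : ZPeriodic v)
    (heq : ∀ y, -((A y) * hessM v y).trace + ⟪B y, gradient v y + p⟫_ℝ = γ) :
    |γ| ≤ ‖p‖ * b :=
  linear_cell_value_bound_general n A hApsd B b hB p γ v hv hvper heq
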